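/- arXiv:math/0507004 — 2 statements merged into one kernel-verified Lean document; each statement's English description precedes it below -/
import Mathlib

section
/- If A and B are convex subsets of hyperbolic space ℍⁿ with A ∩ B nonempty, then the union X of all geodesic segments [a,b] with a ∈ A and b ∈ B is a convex set, and X equals the convex hull of A ∪ B. -/
noncomputable section

/-- The upper half-space model of real hyperbolic `(n+1)`-space `ℍⁿ⁺¹`:
points of `ℝⁿ × ℝ` with positive last coordinate. -/
abbrev Hyp (n : ℕ) := {p : EuclideanSpace ℝ (Fin n) × ℝ // 0 < p.2}

/-- Inverse hyperbolic cosine. -/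
def arcoshR (x : ℝ) : ℝ := Real.log (x + Real.sqrt (x ^ 2 - 1))

/-- The hyperbolic distance in the upper half-space model. -/
def hdist {n : ℕ} (p q : Hyp n) : ℝ :=
  arcoshR (1 + (dist p.1.1 q.1.1 ^ 2 + (p.1.2 - q.1.2) ^ 2) / (2 * p.1.2 * q.1.2))

/-- `s` is a geodesic segment from `a` to `b` with respect to the distance function `d`:
the image of an arclength parametrization realizing `d`. -/
def IsSeg {X : Type*} (d : X → X → ℝ) (s : Set X) (a b : X) : Prop :=
  ∃ γ : ℝ → X, γ 0 = a ∧ γ (d a b) = b ∧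
    (∀ u ∈ Set.Icc (0:ℝ) (d a b), ∀ v ∈ Set.Icc (0:ℝ) (d a b), d (γ u) (γ v) = |u - v|) ∧
    s = γ '' Set.Icc (0:ℝ) (d a b)

/-- A set is convex (wrt the distance `d`) if any two of its points are joined by a
geodesic segment inside the set. -/
def DConvex {X : Type*} (d : X → X → ℝ) (A : Set X) : Prop :=
  ∀ a ∈ A, ∀ b ∈ A, ∃ s, IsSeg d s a b ∧ s ⊆ A

/-- The convex hull: the smallest convex set containing `A`. -/
def dConvexHull {X : Type*} (d : X → X → ℝ) (A : Set X) : Set X :=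
  ⋂₀ {C | A ⊆ C ∧ DConvex d C}

/-!
On the hyperboloid model, the geodesic through `a` and `b` is cut out by the plane spanned by
`a` and `b`, so radial projection to the hyperplane `t = 1` (the Klein model) is injective and
maps geodesic segments onto straight segments. Convexity in `ℍⁿ` thus becomes Euclidean
convexity of the Klein image, and the join of `A` and `B` becomes the Euclidean convex join of
their images, which is convex. Geodesic segments are unique (by the reverse Cauchy–Schwarz
inequality), so every convex set containing `A ∪ B` contains the join.
-/

open Set Function Real
open scoped InnerProductSpace

section ProjectiveModel

variable {X E : Type*} [AddCommGroup E] [Module ℝ E]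

def geodesicJoin (d : X → X → ℝ) (A B : Set X) : Set X :=
  ⋃₀ {s | ∃ a ∈ A, ∃ b ∈ B, IsSeg d s a b}

structure IsProjectiveModel (d : X → X → ℝ) (f : X → E) : Prop where
  injective : Injective f
  exists_isSeg : ∀ a b, ∃ s, IsSeg d s a b
  image_eq_segment : ∀ {s a b}, IsSeg d s a b → f '' s = segment ℝ (f a) (f b)

namespace IsProjectiveModel

variable {d : X → X → ℝ} {f : X → E}

theorem isSeg_iff (hf : IsProjectiveModel d f) {s : Set X} {a b : X} :
    IsSeg d s a b ↔ s = f ⁻¹' segment ℝ (f a) (f b) := by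
  refine ⟨fun h => by rw [← hf.image_eq_segment h, hf.injective.preimage_image], ?_⟩
  rintro rfl
  obtain ⟨s, hs⟩ := hf.exists_isSeg a b
  convert hs
  rw [← hf.image_eq_segment hs, hf.injective.preimage_image]

theorem segment_subset_range (hf : IsProjectiveModel d f) (a b : X) :
    segment ℝ (f a) (f b) ⊆ range f := by
  obtain ⟨s, hs⟩ := hf.exists_isSeg a b
  rw [← hf.image_eq_segment hs]
  exact image_subset_range f s

theorem dConvex_iff (hf : IsProjectiveModel d f) {S : Set X} :
    DConvex d S ↔ Convex ℝ (f '' S) := by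
  rw [convex_iff_segment_subset]
  constructor
  · rintro hS _ ⟨a, ha, rfl⟩ _ ⟨b, hb, rfl⟩
    obtain ⟨s, hs, hsS⟩ := hS a ha b hb
    rw [← hf.image_eq_segment hs]
    exact image_mono hsS
  · intro hS a ha b hb
    refine ⟨_, hf.isSeg_iff.2 rfl, fun x hx => ?_⟩
    obtain ⟨y, hy, hyx⟩ := hS (mem_image_of_mem f ha) (mem_image_of_mem f hb) hx
    rwa [← hf.injective hyx]

theorem geodesicJoin_eq_preimage (hf : IsProjectiveModel d f) (A B : Set X) :
    geodesicJoin d A B = f ⁻¹' convexJoin ℝ (f '' A) (f '' B) := by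
  ext x
  simp only [geodesicJoin, mem_sUnion, mem_ofPred_eq, hf.isSeg_iff, mem_preimage, mem_convexJoin,
    exists_mem_image]
  aesop

theorem convexJoin_image_subset_range (hf : IsProjectiveModel d f) (A B : Set X) :
    convexJoin ℝ (f '' A) (f '' B) ⊆ range f := by
  rw [convexJoin, iUnion₂_subset_iff]
  rintro _ ⟨a, -, rfl⟩
  rw [iUnion₂_subset_iff]
  rintro _ ⟨b, -, rfl⟩
  exact hf.segment_subset_range a b

theorem dConvex_geodesicJoin (hf : IsProjectiveModel d f) {A B : Set X} (hA : DConvex d A)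
    (hB : DConvex d B) : DConvex d (geodesicJoin d A B) := by
  rw [hf.dConvex_iff, hf.geodesicJoin_eq_preimage,
    image_preimage_eq_of_subset (hf.convexJoin_image_subset_range A B)]
  exact (hf.dConvex_iff.1 hA).convexJoin (hf.dConvex_iff.1 hB)

theorem geodesicJoin_subset (hf : IsProjectiveModel d f) {A B C : Set X} (hC : DConvex d C)
    (hAC : A ⊆ C) (hBC : B ⊆ C) : geodesicJoin d A B ⊆ C := by
  rintro x ⟨s, ⟨a, ha, b, hb, hs⟩, hxs⟩
  obtain ⟨t, ht, htC⟩ := hC a (hAC ha) b (hBC hb)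
  rw [hf.isSeg_iff] at hs ht
  exact htC (ht ▸ hs ▸ hxs)

theorem geodesicJoin_eq_dConvexHull (hf : IsProjectiveModel d f) {A B : Set X}
    (hA : DConvex d A) (hB : DConvex d B) (hA₀ : A.Nonempty) (hB₀ : B.Nonempty) :
    geodesicJoin d A B = dConvexHull d (A ∪ B) := by
  refine Subset.antisymm (subset_sInter fun C ⟨hABC, hC⟩ => ?_)
    (sInter_subset_of_mem ⟨?_, ?_⟩)
  · exact hf.geodesicJoin_subset hC (subset_union_left.trans hABC)
      (subset_union_right.trans hABC)
  · rw [hf.geodesicJoin_eq_preimage, ← image_subset_iff, image_union]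
    exact union_subset (subset_convexJoin_left (hB₀.image f))
      (subset_convexJoin_right (hA₀.image f))
  · exact hf.dConvex_geodesicJoin hA hB

end IsProjectiveModel

end ProjectiveModel

section Minkowski

variable {V : Type*} [NormedAddCommGroup V] [InnerProductSpace ℝ V]

def minkowski : LinearMap.BilinForm ℝ (ℝ × V) :=
  (innerₗ V).compl₁₂ (LinearMap.snd ℝ ℝ V) (LinearMap.snd ℝ ℝ V) -
    (LinearMap.mul ℝ ℝ).compl₁₂ (LinearMap.fst ℝ ℝ V) (LinearMap.fst ℝ ℝ V)

theorem minkowski_apply (X Y : ℝ × V) : minkowski X Y = ⟪X.2, Y.2⟫_ℝ - X.1 * Y.1 := rfl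

theorem minkowski_comm (X Y : ℝ × V) : minkowski X Y = minkowski Y X := by
  rw [minkowski_apply, minkowski_apply, real_inner_comm, mul_comm]

theorem minkowski_self (X : ℝ × V) : minkowski X X = ‖X.2‖ ^ 2 - X.1 ^ 2 := by
  rw [minkowski_apply, real_inner_self_eq_norm_sq]
  ring

/-- Reverse Cauchy–Schwarz: the Minkowski orthogonal complement of a timelike vector is
spacelike. -/
theorem sq_fst_le_of_minkowski_eq_zero {X W : ℝ × V} (hX : minkowski X X = -1)
    (hXW : minkowski X W = 0) : W.1 ^ 2 ≤ (X.1 ^ 2 - 1) * minkowski W W := by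
  rw [minkowski_self] at hX ⊢
  rw [minkowski_apply] at hXW
  have hCS := real_inner_mul_inner_self_le X.2 W.2
  rw [real_inner_self_eq_norm_sq, real_inner_self_eq_norm_sq,
    show ⟪X.2, W.2⟫_ℝ = X.1 * W.1 by linarith,
    show ‖X.2‖ ^ 2 = X.1 ^ 2 - 1 by linarith] at hCS
  linarith

theorem eq_zero_of_minkowski_eq_zero {X W : ℝ × V} (hX : minkowski X X = -1)
    (hXW : minkowski X W = 0) (hW : minkowski W W = 0) : W = 0 := by
  have h₁ : W.1 = 0 := by
    simpa [hW] using sq_fst_le_of_minkowski_eq_zero hX hXW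
  rw [minkowski_self, h₁] at hW
  exact Prod.ext h₁ (by simpa using hW)

theorem abs_fst_lt_of_minkowski {X U : ℝ × V} (hX : minkowski X X = -1) (hX₀ : 0 < X.1)
    (hXU : minkowski X U = 0) (hU : minkowski U U = 1) : |U.1| < X.1 := by
  have := sq_fst_le_of_minkowski_eq_zero hX hXU
  rw [hU, mul_one] at this
  exact abs_lt_of_sq_lt_sq (by linarith) hX₀.le

section Frame

variable {A U : ℝ × V}

theorem minkowski_cosh_smul_add_sinh_smul (hA : minkowski A A = -1) (hAU : minkowski A U = 0)
    (hU : minkowski U U = 1) (u v : ℝ) :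
    minkowski (cosh u • A + sinh u • U) (cosh v • A + sinh v • U) = -cosh (u - v) := by
  simp only [map_add, map_smul, LinearMap.add_apply, LinearMap.smul_apply, smul_eq_mul,
    minkowski_comm U A, hA, hAU, hU, cosh_sub]
  ring

theorem fst_cosh_smul_add_sinh_smul_pos (hA : minkowski A A = -1) (hA₀ : 0 < A.1)
    (hAU : minkowski A U = 0) (hU : minkowski U U = 1) (t : ℝ) :
    0 < (cosh t • A + sinh t • U).1 := by
  have hUA := abs_fst_lt_of_minkowski hA hA₀ hAU hU
  have hsc : |sinh t| < cosh t := by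
    rw [abs_sinh, ← cosh_abs]
    exact sinh_lt_cosh _
  have : |sinh t * U.1| < cosh t * A.1 := by
    rw [abs_mul]; exact mul_lt_mul'' hsc hUA (abs_nonneg _) (abs_nonneg _)
  simp only [Prod.fst_add, Prod.smul_fst, smul_eq_mul]
  linarith [neg_abs_le (sinh t * U.1)]

theorem eq_cosh_smul_add_sinh_smul (hA : minkowski A A = -1)
    (hAU : minkowski A U = 0) (hU : minkowski U U = 1) {M : ℝ × V} {u : ℝ}
    (hM : minkowski M M = -1) (hAM : minkowski A M = -cosh u) (hUM : minkowski U M = sinh u) :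
    M = cosh u • A + sinh u • U := by
  rw [← sub_eq_zero]
  apply eq_zero_of_minkowski_eq_zero hA
  · simp only [map_sub, map_add, map_smul, smul_eq_mul, hA, hAU, hAM]
    ring
  · simp only [map_sub, map_add, map_smul, LinearMap.sub_apply, LinearMap.add_apply,
      LinearMap.smul_apply, smul_eq_mul, minkowski_comm U A, minkowski_comm M A,
      minkowski_comm M U, hA, hAU, hU, hM, hAM, hUM]
    linear_combination cosh_sq_sub_sinh_sq u

end Frame

end Minkowski

namespace Hyp

variable {n : ℕ}

/-- The standard isometry of the upper half-space onto the upper sheet of the hyperboloid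
`⟪X, X⟫ = -1` in Minkowski space `ℝ × (ℝⁿ × ℝ)`. -/
def toHyperboloid (p : Hyp n) : ℝ × WithLp 2 (EuclideanSpace ℝ (Fin n) × ℝ) :=
  ((‖p.1.1‖ ^ 2 + p.1.2 ^ 2 + 1) / (2 * p.1.2),
    WithLp.toLp 2 ((p.1.2)⁻¹ • p.1.1, (‖p.1.1‖ ^ 2 + p.1.2 ^ 2 - 1) / (2 * p.1.2)))

theorem neg_minkowski_toHyperboloid (p q : Hyp n) :
    -minkowski (toHyperboloid p) (toHyperboloid q) =
      1 + (dist p.1.1 q.1.1 ^ 2 + (p.1.2 - q.1.2) ^ 2) / (2 * p.1.2 * q.1.2) := by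
  have hp := p.2
  have hq := q.2
  simp only [minkowski_apply, toHyperboloid, WithLp.prod_inner_apply, real_inner_smul_left,
    real_inner_smul_right, dist_eq_norm, norm_sub_sq_real, RCLike.inner_apply, conj_trivial]
  field_simp
  ring

theorem one_le_neg_minkowski_toHyperboloid (p q : Hyp n) :
    1 ≤ -minkowski (toHyperboloid p) (toHyperboloid q) := by
  have hp := p.2
  have hq := q.2
  rw [neg_minkowski_toHyperboloid]
  exact le_add_of_nonneg_right (by positivity)

theorem hdist_eq_arcosh (p q : Hyp n) :
    hdist p q = arcosh (-minkowski (toHyperboloid p) (toHyperboloid q)) := by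
  rw [neg_minkowski_toHyperboloid]
  rfl

theorem cosh_hdist (p q : Hyp n) :
    cosh (hdist p q) = -minkowski (toHyperboloid p) (toHyperboloid q) := by
  rw [hdist_eq_arcosh, cosh_arcosh (one_le_neg_minkowski_toHyperboloid p q)]

theorem minkowski_toHyperboloid_self (p : Hyp n) :
    minkowski (toHyperboloid p) (toHyperboloid p) = -1 := by
  rw [← neg_neg (minkowski _ _), neg_minkowski_toHyperboloid]
  simp

theorem fst_toHyperboloid_pos (p : Hyp n) : 0 < (toHyperboloid p).1 := by
  have hp := p.2
  unfold toHyperboloid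
  positivity

theorem eq_of_hdist_eq_zero {p q : Hyp n} (h : hdist p q = 0) : p = q := by
  have hp := p.2
  have hq := q.2
  rw [hdist_eq_arcosh, arcosh_eq_zero_iff (one_le_neg_minkowski_toHyperboloid p q),
    neg_minkowski_toHyperboloid, add_eq_left, div_eq_zero_iff] at h
  have h' : dist p.1.1 q.1.1 ^ 2 + (p.1.2 - q.1.2) ^ 2 = 0 := by
    rcases h with h | h
    · exact h
    · nlinarith
  have hx : dist p.1.1 q.1.1 = 0 := by nlinarith [dist_nonneg (x := p.1.1) (y := q.1.1)]
  exact Subtype.ext (Prod.ext (dist_eq_zero.1 hx) (by nlinarith))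

theorem toHyperboloid_injective : Injective (toHyperboloid (n := n)) := fun p q h =>
  eq_of_hdist_eq_zero <| by
    rw [hdist_eq_arcosh, ← h, minkowski_toHyperboloid_self, neg_neg, arcosh_zero]

theorem mem_range_toHyperboloid {X : ℝ × WithLp 2 (EuclideanSpace ℝ (Fin n) × ℝ)}
    (hX : minkowski X X = -1) (hX₀ : 0 < X.1) : X ∈ range toHyperboloid := by
  obtain ⟨t, ⟨x, z⟩⟩ := X
  simp only [minkowski_apply, WithLp.prod_inner_apply, real_inner_self_eq_norm_sq,
    RCLike.inner_apply, conj_trivial] at hX hX₀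
  have hs : 0 < t - z := by nlinarith [sq_nonneg ‖x‖]
  refine ⟨⟨((t - z)⁻¹ • x, (t - z)⁻¹), inv_pos.2 hs⟩, ?_⟩
  simp only [toHyperboloid, norm_smul, norm_inv, Real.norm_eq_abs, abs_of_pos hs, mul_pow,
    inv_inv, smul_smul, mul_inv_cancel₀ hs.ne', one_smul]
  have hx : ‖x‖ ^ 2 = t ^ 2 - z ^ 2 - 1 := by linarith
  rw [hx]
  congr 3
  · field_simp
    ring
  · field_simp
    ring

theorem hdist_nonneg (p q : Hyp n) : 0 ≤ hdist p q := by
  rw [hdist_eq_arcosh]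
  exact arcosh_nonneg (one_le_neg_minkowski_toHyperboloid p q)

theorem hdist_self (p : Hyp n) : hdist p p = 0 := by
  rw [hdist_eq_arcosh, minkowski_toHyperboloid_self, neg_neg, arcosh_zero]

instance : Nonempty (Hyp n) := ⟨⟨(0, 1), one_pos⟩⟩

variable {a b : Hyp n}

theorem sinh_hdist_pos (hab : a ≠ b) : 0 < sinh (hdist a b) :=
  sinh_pos_iff.2 <| (hdist_nonneg a b).lt_of_ne fun h => hab (eq_of_hdist_eq_zero h.symm)

def direction (a b : Hyp n) : ℝ × WithLp 2 (EuclideanSpace ℝ (Fin n) × ℝ) :=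
  (sinh (hdist a b))⁻¹ • (toHyperboloid b - cosh (hdist a b) • toHyperboloid a)

theorem minkowski_toHyperboloid_direction (a b : Hyp n) :
    minkowski (toHyperboloid a) (direction a b) = 0 := by
  rw [direction, map_smul, map_sub, map_smul, minkowski_toHyperboloid_self,
    ← neg_neg (minkowski _ _), ← cosh_hdist]
  simp

theorem minkowski_direction_self (hab : a ≠ b) :
    minkowski (direction a b) (direction a b) = 1 := by
  have hs := (sinh_hdist_pos hab).ne'
  simp only [direction, map_smul, map_sub, LinearMap.smul_apply, LinearMap.sub_apply, smul_eq_mul,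
    minkowski_toHyperboloid_self, minkowski_comm (toHyperboloid b) (toHyperboloid a)]
  rw [← neg_neg (minkowski (toHyperboloid a) _), ← cosh_hdist]
  field_simp
  linear_combination cosh_sq_sub_sinh_sq (hdist a b)

/-- Junk for `a = b`, where `direction a a = 0`. -/
def geodesic (a b : Hyp n) (t : ℝ) : Hyp n :=
  invFun toHyperboloid (cosh t • toHyperboloid a + sinh t • direction a b)

theorem toHyperboloid_geodesic (hab : a ≠ b) (t : ℝ) :
    toHyperboloid (geodesic a b t) = cosh t • toHyperboloid a + sinh t • direction a b := by
  refine invFun_eq (mem_range_toHyperboloid ?_ ?_)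
  · rw [minkowski_cosh_smul_add_sinh_smul (minkowski_toHyperboloid_self a)
      (minkowski_toHyperboloid_direction a b) (minkowski_direction_self hab), sub_self, cosh_zero]
  · exact fst_cosh_smul_add_sinh_smul_pos (minkowski_toHyperboloid_self a)
      (fst_toHyperboloid_pos a) (minkowski_toHyperboloid_direction a b)
      (minkowski_direction_self hab) t

theorem hdist_geodesic (hab : a ≠ b) (u v : ℝ) :
    hdist (geodesic a b u) (geodesic a b v) = |u - v| := by
  rw [hdist_eq_arcosh, toHyperboloid_geodesic hab, toHyperboloid_geodesic hab,
    minkowski_cosh_smul_add_sinh_smul (minkowski_toHyperboloid_self a)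
      (minkowski_toHyperboloid_direction a b) (minkowski_direction_self hab),
    neg_neg, ← cosh_abs, arcosh_cosh (abs_nonneg _)]

theorem geodesic_zero (hab : a ≠ b) : geodesic a b 0 = a :=
  toHyperboloid_injective <| by simp [toHyperboloid_geodesic hab]

theorem geodesic_hdist (hab : a ≠ b) : geodesic a b (hdist a b) = b :=
  toHyperboloid_injective <| by
    rw [toHyperboloid_geodesic hab, direction, smul_smul,
      mul_inv_cancel₀ (sinh_hdist_pos hab).ne', one_smul, add_sub_cancel]

theorem isSeg_geodesic (hab : a ≠ b) :
    IsSeg hdist (geodesic a b '' Icc 0 (hdist a b)) a b :=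
  ⟨geodesic a b, geodesic_zero hab, geodesic_hdist hab, fun u _ v _ => hdist_geodesic hab u v,
    rfl⟩

theorem eq_geodesic_of_hdist_eq (hab : a ≠ b) {m : Hyp n} {u : ℝ} (ham : hdist a m = u)
    (hmb : hdist m b = hdist a b - u) : m = geodesic a b u := by
  have hAM : minkowski (toHyperboloid a) (toHyperboloid m) = -cosh u := by
    rw [← ham, cosh_hdist, neg_neg]
  have hMB : minkowski (toHyperboloid b) (toHyperboloid m) = -cosh (hdist a b - u) := by
    rw [← hmb, cosh_hdist, neg_neg, minkowski_comm]
  refine toHyperboloid_injective ?_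
  rw [toHyperboloid_geodesic hab]
  refine eq_cosh_smul_add_sinh_smul (minkowski_toHyperboloid_self a)
    (minkowski_toHyperboloid_direction a b) (minkowski_direction_self hab)
    (minkowski_toHyperboloid_self m) hAM ?_
  have hs := (sinh_hdist_pos hab).ne'
  simp only [direction, map_smul, map_sub, LinearMap.smul_apply, LinearMap.sub_apply, smul_eq_mul,
    hAM, hMB, cosh_sub]
  field_simp
  ring

theorem eq_image_geodesic_of_isSeg (hab : a ≠ b) {s : Set (Hyp n)} (h : IsSeg hdist s a b) :
    s = geodesic a b '' Icc 0 (hdist a b) := by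
  obtain ⟨γ, hγ₀, hγ₁, hγ, rfl⟩ := h
  refine image_congr fun u hu => eq_geodesic_of_hdist_eq hab ?_ ?_
  · have := hγ 0 (left_mem_Icc.2 (hdist_nonneg a b)) u hu
    rwa [hγ₀, zero_sub, abs_neg, abs_of_nonneg hu.1] at this
  · have := hγ u hu _ (right_mem_Icc.2 (hdist_nonneg a b))
    rwa [hγ₁, abs_sub_comm, abs_of_nonneg (sub_nonneg.2 hu.2)] at this

theorem isSeg_singleton (a : Hyp n) : IsSeg hdist {a} a a := by
  refine ⟨fun _ => a, rfl, rfl, fun u _ v _ => ?_, ?_⟩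
  all_goals simp_all [hdist_self]

theorem eq_singleton_of_isSeg {s : Set (Hyp n)} (h : IsSeg hdist s a a) : s = {a} := by
  obtain ⟨γ, hγ₀, -, -, rfl⟩ := h
  rw [hdist_self, Icc_self, image_singleton, hγ₀]

/-- Radial projection of the hyperboloid to the hyperplane `t = 1`: the Klein model. -/
def klein (p : Hyp n) : WithLp 2 (EuclideanSpace ℝ (Fin n) × ℝ) :=
  (toHyperboloid p).1⁻¹ • (toHyperboloid p).2

theorem snd_toHyperboloid (p : Hyp n) : (toHyperboloid p).2 = (toHyperboloid p).1 • klein p := by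
  rw [klein, smul_smul, mul_inv_cancel₀ (fst_toHyperboloid_pos p).ne', one_smul]

theorem klein_injective : Injective (klein (n := n)) := by
  intro p q h
  have hq := fst_toHyperboloid_pos q
  set c := (toHyperboloid p).1 / (toHyperboloid q).1
  have hc₀ : 0 < c := div_pos (fst_toHyperboloid_pos p) hq
  have hpq : toHyperboloid p = c • toHyperboloid q := by
    refine Prod.ext (div_mul_cancel₀ _ hq.ne').symm ?_
    rw [Prod.smul_snd, snd_toHyperboloid, snd_toHyperboloid, h, smul_smul,
      div_mul_cancel₀ _ hq.ne']
  have hc : c ^ 2 = 1 := by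
    have := minkowski_toHyperboloid_self p
    simp only [hpq, map_smul, LinearMap.smul_apply, smul_eq_mul,
      minkowski_toHyperboloid_self] at this
    linear_combination -this
  rw [pow_eq_one_iff_of_nonneg hc₀.le two_ne_zero] at hc
  exact toHyperboloid_injective (by rw [hpq, hc, one_smul])

theorem klein_eq_lineMap {a b m : Hyp n} {α β : ℝ}
    (h : toHyperboloid m = α • toHyperboloid a + β • toHyperboloid b) :
    klein m = AffineMap.lineMap (klein a) (klein b)
      (β * (toHyperboloid b).1 / (toHyperboloid m).1) := by
  have hT : (toHyperboloid m).1 = α * (toHyperboloid a).1 + β * (toHyperboloid b).1 := by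
    rw [h]; rfl
  have hm := (fst_toHyperboloid_pos m).ne'
  rw [hT] at hm
  rw [klein, AffineMap.lineMap_apply_module, hT, h, Prod.snd_add, Prod.smul_snd, Prod.smul_snd,
    snd_toHyperboloid a, snd_toHyperboloid b]
  match_scalars
  · field_simp
    linarith
  · field_simp

theorem toHyperboloid_geodesic_eq_combination (hab : a ≠ b) (t : ℝ) :
    toHyperboloid (geodesic a b t) =
      (sinh (hdist a b - t) / sinh (hdist a b)) • toHyperboloid a +
        (sinh t / sinh (hdist a b)) • toHyperboloid b := by
  have hs := (sinh_hdist_pos hab).ne'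
  rw [toHyperboloid_geodesic hab, direction, sinh_sub]
  match_scalars
  · field_simp
    ring
  · field_simp

theorem image_klein_geodesic (hab : a ≠ b) :
    klein '' (geodesic a b '' Icc 0 (hdist a b)) = segment ℝ (klein a) (klein b) := by
  have hd := sinh_hdist_pos hab
  have hTa := fst_toHyperboloid_pos a
  have hTb := fst_toHyperboloid_pos b
  have hT (t : ℝ) := fst_toHyperboloid_pos (geodesic a b t)
  -- the position of `klein (geodesic a b t)` on the segment, running continuously from 0 to 1
  set θ : ℝ → ℝ := fun t =>
    sinh t / sinh (hdist a b) * (toHyperboloid b).1 / (toHyperboloid (geodesic a b t)).1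
  have hθ (t : ℝ) : klein (geodesic a b t) = AffineMap.lineMap (klein a) (klein b) (θ t) :=
    klein_eq_lineMap (toHyperboloid_geodesic_eq_combination hab t)
  have hθ_cont : Continuous θ := by
    have : (fun t => (toHyperboloid (geodesic a b t)).1) =
        fun t => cosh t * (toHyperboloid a).1 + sinh t * (direction a b).1 := by
      ext t; simp [toHyperboloid_geodesic hab]
    refine .div (by fun_prop) ?_ fun t => (hT t).ne'
    rw [this]; fun_prop
  have hθ_mapsTo : MapsTo θ (Icc 0 (hdist a b)) (Icc 0 1) := by
    intro t ⟨ht₀, htd⟩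
    have hTt := congrArg Prod.fst (toHyperboloid_geodesic_eq_combination hab t)
    simp only [Prod.fst_add, Prod.smul_fst, smul_eq_mul] at hTt
    have h₁ : 0 ≤ sinh (hdist a b - t) := sinh_nonneg_iff.2 (sub_nonneg.2 htd)
    have h₂ : 0 ≤ sinh t := sinh_nonneg_iff.2 ht₀
    refine ⟨div_nonneg (mul_nonneg (div_nonneg h₂ hd.le) hTb.le) (hT t).le,
      (div_le_one (hT t)).2 ?_⟩
    rw [hTt]
    exact le_add_of_nonneg_left (by positivity)
  have hθ_image : θ '' Icc 0 (hdist a b) = Icc 0 1 := by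
    refine Subset.antisymm hθ_mapsTo.image_subset ?_
    have := intermediate_value_Icc (hdist_nonneg a b) hθ_cont.continuousOn
    simpa [θ, geodesic_hdist hab, hd.ne', hTb.ne'] using this
  rw [image_image, segment_eq_image_lineMap, ← hθ_image, image_image]
  simp only [hθ]

theorem isProjectiveModel_klein : IsProjectiveModel hdist (klein (n := n)) where
  injective := klein_injective
  exists_isSeg a b := by
    by_cases hab : a = b
    · exact hab ▸ ⟨_, isSeg_singleton a⟩
    · exact ⟨_, isSeg_geodesic hab⟩
  image_eq_segment {s a b} h := by
    by_cases hab : a = b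
    · subst hab
      rw [eq_singleton_of_isSeg h, image_singleton, segment_same]
    · rw [eq_image_geodesic_of_isSeg hab h, image_klein_geodesic hab]

end Hyp

/-- **Join of two convex sets.** If `A` and `B` are convex subsets of hyperbolic space
with nonempty intersection, then the union `X` of all geodesic segments `[a,b]` with
`a ∈ A`, `b ∈ B` is convex, and equals the convex hull of `A ∪ B`. -/
theorem join_eq_convexHull {n : ℕ} (A B : Set (Hyp n))
    (hA : DConvex hdist A) (hB : DConvex hdist B) (hAB : (A ∩ B).Nonempty) :
    DConvex hdist (⋃₀ {s | ∃ a ∈ A, ∃ b ∈ B, IsSeg hdist s a b}) ∧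
      ⋃₀ {s | ∃ a ∈ A, ∃ b ∈ B, IsSeg hdist s a b} = dConvexHull hdist (A ∪ B) :=
  ⟨Hyp.isProjectiveModel_klein.dConvex_geodesicJoin hA hB,
    Hyp.isProjectiveModel_klein.geodesicJoin_eq_dConvexHull hA hB hAB.left hAB.right⟩
end
end

section
/- Let M be a connected hyperbolic n-manifold, C a cusp of M with ∂_cC ⊆ closure(M \ C), and suppose M is convex. Then CH(closure(M \ C)) = closure(M \ C) ∪ CH(∂_cC), where CH denotes convex hull taken inside M. -/
/-!
Write `D` for `closure (M \ C)`. Since `∂_cC ⊆ D`, the hull of `∂_cC` lies in the hull of `D`;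
conversely it suffices to show that `D ∪ B` is convex for every closed convex `B ⊇ ∂_cC`.
Given `a, b ∈ D ∪ B`, lift a shortest path from `a` to `b` to a geodesic `γ` in `M̃`. Horoballs
centred at `∞` are convex, so `γ` meets each translate `g⁻¹ {1 ≤ xₙ}` in a closed interval, and
by precise invariance two such intervals are equal or disjoint. An endpoint of such an interval
lies on the horosphere, hence projects into `∂_cC ⊆ B`, unless it is an endpoint of `γ`, which
then lies in `(D ∪ B) ∩ C ⊆ B`. Rerouting the projection of each interval through a geodesic
of `B` with the same endpoints gives a path from `a` to `b` in `D ∪ B` which, by the triangle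
inequality, is again a geodesic.

Distances are computed in the hyperboloid model, where the triangle inequality for the
upper half-space metric is the reversed Cauchy–Schwarz inequality and horoball convexity
follows from writing a point of a geodesic as a combination of its endpoints.
-/

noncomputable section

/-- The group of isometries of hyperbolic space, as a subgroup of the permutation
group of `Hyp n`. -/
def hIsomGrp (n : ℕ) : Subgroup (Equiv.Perm (Hyp n)) where
  carrier := {f | ∀ x y, hdist (f x) (f y) = hdist x y}
  one_mem' := fun _ _ => rfl
  mul_mem' := by
    intro f g hf hg x y
    have : ∀ z, (f * g) z = f (g z) := fun z => rfl
    rw [this, this, hf, hg]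
  inv_mem' := by
    intro f hf x y
    have := hf (f⁻¹ x) (f⁻¹ y)
    simpa using this.symm

/-- Height-preserving isometries of upper half-space: parabolic (or elliptic)
isometries fixing `∞` and preserving every horosphere about it. -/
def HeightPres {n : ℕ} (g : Equiv.Perm (Hyp n)) : Prop :=
  ∀ p : Hyp n, (g p).1.2 = p.1.2

/-- The quotient manifold `M = M̃/Γ`, as a quotient of the invariant set `M̃ ⊆ ℍⁿ`. -/
def HQuot {n : ℕ} (Γ : Subgroup (Equiv.Perm (Hyp n))) (Mt : Set (Hyp n)) : Type _ :=
  Quot (fun x y : ↥Mt => ∃ g ∈ Γ, g x.1 = y.1)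

/-- The induced quotient distance on `M = M̃/Γ`. -/
noncomputable def qd {n : ℕ} (Γ : Subgroup (Equiv.Perm (Hyp n))) (Mt : Set (Hyp n))
    (a b : HQuot Γ Mt) : ℝ :=
  sInf {r : ℝ | ∃ x y : ↥Mt, Quot.mk _ x = a ∧ Quot.mk _ y = b ∧ hdist x.1 y.1 = r}

/-- Metric closure in the quotient. -/
def mcl {n : ℕ} (Γ : Subgroup (Equiv.Perm (Hyp n))) (Mt : Set (Hyp n))
    (A : Set (HQuot Γ Mt)) : Set (HQuot Γ Mt) :=
  A ∪ {a | ∀ ε > 0, ∃ b ∈ A, qd Γ Mt a b < ε}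

/-- The convex hull in the quotient manifold: the smallest closed convex subset
containing `A`. -/
def qHull {n : ℕ} (Γ : Subgroup (Equiv.Perm (Hyp n))) (Mt : Set (Hyp n))
    (A : Set (HQuot Γ Mt)) : Set (HQuot Γ Mt) :=
  ⋂₀ {B | A ⊆ B ∧ DConvex (qd Γ Mt) B ∧ mcl Γ Mt B ⊆ B}

/-- The cusp `C ⊆ M`: the image of the part of `M̃` in the horoball `{xₙ ≥ 1}`. -/
def cuspSet {n : ℕ} (Γ : Subgroup (Equiv.Perm (Hyp n))) (Mt : Set (Hyp n)) :
    Set (HQuot Γ Mt) :=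
  Quot.mk _ '' {x : ↥Mt | 1 ≤ x.1.1.2}

/-- The cusp boundary `∂_cC ⊆ M`: the image of the part of `M̃` on the horosphere
`{xₙ = 1}`. -/
def cuspBdry {n : ℕ} (Γ : Subgroup (Equiv.Perm (Hyp n))) (Mt : Set (Hyp n)) :
    Set (HQuot Γ Mt) :=
  Quot.mk _ '' {x : ↥Mt | x.1.1.2 = 1}

open Real Set

variable {n : ℕ}

section GeodesicPaths

variable {X Y : Type*}

def IsGeodesicOn (d : X → X → ℝ) (γ : ℝ → X) (s : Set ℝ) : Prop :=
  ∀ u ∈ s, ∀ v ∈ s, d (γ u) (γ v) = |u - v|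

variable {d : X → X → ℝ} {γ : ℝ → X}

lemma IsGeodesicOn.map {d' : Y → Y → ℝ} {s : Set ℝ}
    (hγ : IsGeodesicOn d γ s) {f : X → Y} (hf : ∀ x y, d' (f x) (f y) = d x y) :
    IsGeodesicOn d' (f ∘ γ) s := fun u hu v hv => (hf _ _).trans (hγ u hu v hv)

lemma IsGeodesicOn.mono {s t : Set ℝ} (hγ : IsGeodesicOn d γ t)
    (hst : s ⊆ t) : IsGeodesicOn d γ s := fun u hu v hv => hγ u (hst hu) v (hst hv)

lemma IsGeodesicOn.dist_eq_sub {s : Set ℝ} (hγ : IsGeodesicOn d γ s)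
    {u v : ℝ} (hu : u ∈ s) (hv : v ∈ s) (huv : u ≤ v) : d (γ u) (γ v) = v - u := by
  rw [hγ u hu v hv, abs_of_nonpos (by linarith), neg_sub]

lemma IsGeodesicOn.comp_sub_const {a b : ℝ}
    (hγ : IsGeodesicOn d γ (Icc 0 (b - a))) : IsGeodesicOn d (fun t => γ (t - a)) (Icc a b) := by
  intro u hu v hv
  rw [hγ _ ⟨sub_nonneg.mpr hu.1, sub_le_sub_right hu.2 a⟩ _
    ⟨sub_nonneg.mpr hv.1, sub_le_sub_right hv.2 a⟩, sub_sub_sub_cancel_right]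

lemma IsGeodesicOn.of_sub (hsymm : ∀ x y, d x y = d y x) {S : Set ℝ}
    (h : ∀ u ∈ S, ∀ v ∈ S, u ≤ v → d (γ u) (γ v) = v - u) : IsGeodesicOn d γ S := by
  intro u hu v hv
  rcases le_total u v with huv | hvu
  · rw [h u hu v hv huv, abs_of_nonpos (by linarith), neg_sub]
  · rw [hsymm, h v hv u hu hvu, abs_of_nonneg (by linarith)]

lemma IsGeodesicOn.of_le (hsymm : ∀ x y, d x y = d y x)
    (htri : ∀ x y z, d x z ≤ d x y + d y z) {a b : ℝ}
    (hle : ∀ u ∈ Icc a b, ∀ v ∈ Icc a b, u ≤ v → d (γ u) (γ v) ≤ v - u)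
    (hab : b - a ≤ d (γ a) (γ b)) : IsGeodesicOn d γ (Icc a b) := by
  refine IsGeodesicOn.of_sub hsymm fun u hu v hv huv => le_antisymm (hle u hu v hv huv) ?_
  have ha : a ∈ Icc a b := ⟨le_rfl, hu.1.trans hu.2⟩
  have hb : b ∈ Icc a b := ⟨hu.1.trans hu.2, le_rfl⟩
  have := hle a ha u hu hu.1
  have := hle v hv b hb hv.2
  linarith [htri (γ a) (γ u) (γ b), htri (γ u) (γ v) (γ b)]

section Chunks

-- `c t` indexes the chunk `[l (c t), r (c t)]` of `[0, L]` containing `t`.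
variable {ι : Type*} {L : ℝ} {c : ℝ → ι} {l r : ι → ℝ}

lemma right_le_left_of_ne (hmem : ∀ t ∈ Icc 0 L, t ∈ Icc (l (c t)) (r (c t)))
    (hc : ∀ t ∈ Icc 0 L, ∀ s ∈ Icc (l (c t)) (r (c t)), c s = c t)
    {u v : ℝ} (hu : u ∈ Icc 0 L) (hv : v ∈ Icc 0 L) (huv : u ≤ v) (hne : c u ≠ c v) :
    r (c u) ≤ l (c v) := by
  by_contra! h
  obtain ⟨hlu, hur⟩ := hmem u hu
  obtain ⟨hlv, hvr⟩ := hmem v hv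
  apply hne
  rw [← hc u hu _ ⟨hlu.trans (le_max_left _ _), max_le hur h.le⟩,
    hc v hv _ ⟨le_max_right _ _, max_le (huv.trans hvr) (hlv.trans hvr)⟩]

theorem IsGeodesicOn.splice (hsymm : ∀ x y, d x y = d y x)
    (htri : ∀ x y z, d x z ≤ d x y + d y z) (hL : 0 ≤ L) {P : ℝ → X}
    (hP : IsGeodesicOn d P (Icc 0 L))
    (hmem : ∀ t ∈ Icc 0 L, t ∈ Icc (l (c t)) (r (c t)))
    (hsub : ∀ t ∈ Icc 0 L, Icc (l (c t)) (r (c t)) ⊆ Icc 0 L)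
    (hc : ∀ t ∈ Icc 0 L, ∀ s ∈ Icc (l (c t)) (r (c t)), c s = c t)
    {δ : ι → ℝ → X} (hδ : ∀ t ∈ Icc 0 L, IsGeodesicOn d (δ (c t)) (Icc (l (c t)) (r (c t))))
    (hδl : ∀ t ∈ Icc 0 L, δ (c t) (l (c t)) = P (l (c t)))
    (hδr : ∀ t ∈ Icc 0 L, δ (c t) (r (c t)) = P (r (c t))) :
    IsGeodesicOn d (fun t => δ (c t) t) (Icc 0 L) ∧ δ (c 0) 0 = P 0 ∧ δ (c L) L = P L := by
  have hl : ∀ t ∈ Icc 0 L, l (c t) ∈ Icc (l (c t)) (r (c t)) := fun t ht =>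
    ⟨le_rfl, (hmem t ht).1.trans (hmem t ht).2⟩
  have hr : ∀ t ∈ Icc 0 L, r (c t) ∈ Icc (l (c t)) (r (c t)) := fun t ht =>
    ⟨(hmem t ht).1.trans (hmem t ht).2, le_rfl⟩
  have hleft : ∀ t ∈ Icc 0 L, d (P (l (c t))) (δ (c t) t) = t - l (c t) := fun t ht => by
    rw [← hδl t ht, (hδ t ht).dist_eq_sub (hl t ht) (hmem t ht) (hmem t ht).1]
  have hright : ∀ t ∈ Icc 0 L, d (δ (c t) t) (P (r (c t))) = r (c t) - t := fun t ht => by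
    rw [← hδr t ht, (hδ t ht).dist_eq_sub (hmem t ht) (hr t ht) (hmem t ht).2]
  have h0L : (0 : ℝ) ∈ Icc 0 L := ⟨le_rfl, hL⟩
  have hLL : L ∈ Icc 0 L := ⟨hL, le_rfl⟩
  have h0 : δ (c 0) 0 = P 0 := by
    have h := le_antisymm (hmem 0 h0L).1 (hsub 0 h0L (hl 0 h0L)).1
    exact (congrArg (δ (c 0)) h).symm.trans ((hδl 0 h0L).trans (congrArg P h))
  have h1 : δ (c L) L = P L := by
    have h := le_antisymm (hsub L hLL (hr L hLL)).2 (hmem L hLL).2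
    exact (congrArg (δ (c L)) h).symm.trans ((hδr L hLL).trans (congrArg P h))
  refine ⟨IsGeodesicOn.of_le hsymm htri (fun u hu v hv huv => ?_) ?_, h0, h1⟩
  · by_cases huv' : c u = c v
    · have hv' : v ∈ Icc (l (c u)) (r (c u)) := huv' ▸ hmem v hv
      simp only [← huv']
      exact ((hδ u hu).dist_eq_sub (hmem u hu) hv' huv).le
    have hgap := right_le_left_of_ne hmem hc hu hv huv huv'
    have := hP.dist_eq_sub (hsub u hu (hr u hu)) (hsub v hv (hl v hv)) hgap
    linarith [hleft v hv, hright u hu, htri (δ (c u) u) (P (r (c u))) (δ (c v) v),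
      htri (P (r (c u))) (P (l (c v))) (δ (c v) v)]
  · rw [h0, h1, hP.dist_eq_sub h0L hLL hL, sub_zero]

lemma DConvex.exists_isGeodesicOn {B : Set X} (hB : DConvex d B) {P : ℝ → X} {S : Set ℝ}
    (hP : IsGeodesicOn d P S) {α β : ℝ} (hα : α ∈ S) (hβ : β ∈ S) (hαβ : α ≤ β)
    (hPα : P α ∈ B) (hPβ : P β ∈ B) :
    ∃ δ : ℝ → X, IsGeodesicOn d δ (Icc α β) ∧ δ α = P α ∧ δ β = P β ∧ MapsTo δ (Icc α β) B := by
  obtain ⟨_, ⟨γ, h0, h1, hγ, rfl⟩, hsub⟩ := hB _ hPα _ hPβ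
  rw [hP.dist_eq_sub hα hβ hαβ] at h1 hγ hsub
  refine ⟨fun t => γ (t - α), IsGeodesicOn.comp_sub_const hγ, by simpa using h0, h1, ?_⟩
  exact fun t ht => hsub (mem_image_of_mem γ ⟨sub_nonneg.mpr ht.1, sub_le_sub_right ht.2 α⟩)

theorem IsGeodesicOn.exists_reroute (hsymm : ∀ x y, d x y = d y x)
    (htri : ∀ x y z, d x z ≤ d x y + d y z) (hL : 0 ≤ L) {P : ℝ → X}
    (hP : IsGeodesicOn d P (Icc 0 L))
    (hmem : ∀ t ∈ Icc 0 L, t ∈ Icc (l (c t)) (r (c t)))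
    (hsub : ∀ t ∈ Icc 0 L, Icc (l (c t)) (r (c t)) ⊆ Icc 0 L)
    (hc : ∀ t ∈ Icc 0 L, ∀ s ∈ Icc (l (c t)) (r (c t)), c s = c t)
    {B : Set X} (hB : DConvex d B) :
    ∃ Q : ℝ → X, IsGeodesicOn d Q (Icc 0 L) ∧ Q 0 = P 0 ∧ Q L = P L ∧
      ∀ t ∈ Icc 0 L, Q t ∈ B ∨ (Q t = P t ∧ ¬ (P (l (c t)) ∈ B ∧ P (r (c t)) ∈ B)) := by
  have hδ : ∀ i, ∃ δ : ℝ → X, ∀ t ∈ Icc 0 L, c t = i →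
      IsGeodesicOn d δ (Icc (l i) (r i)) ∧ δ (l i) = P (l i) ∧ δ (r i) = P (r i) ∧
        (MapsTo δ (Icc (l i) (r i)) B ∨ (δ = P ∧ ¬ (P (l i) ∈ B ∧ P (r i) ∈ B))) := by
    intro i
    by_cases hi : ∃ t ∈ Icc 0 L, c t = i ∧ P (l i) ∈ B ∧ P (r i) ∈ B
    · obtain ⟨t, ht, rfl, hPl, hPr⟩ := hi
      have hlr := (hmem t ht).1.trans (hmem t ht).2
      obtain ⟨δ, hδ, hδl, hδr, hδB⟩ := hB.exists_isGeodesicOn hP (hsub t ht ⟨le_rfl, hlr⟩)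
        (hsub t ht ⟨hlr, le_rfl⟩) hlr hPl hPr
      exact ⟨δ, fun _ _ _ => ⟨hδ, hδl, hδr, Or.inl hδB⟩⟩
    · refine ⟨P, fun t ht hti => ⟨hP.mono (hti ▸ hsub t ht), rfl, rfl, Or.inr ⟨rfl, ?_⟩⟩⟩
      exact fun hend => hi ⟨t, ht, hti, hend⟩
  choose δ hδ using hδ
  obtain ⟨hQ, hQ0, hQL⟩ := IsGeodesicOn.splice hsymm htri hL hP hmem hsub hc
    (fun t ht => (hδ _ t ht rfl).1) (fun t ht => (hδ _ t ht rfl).2.1)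
    (fun t ht => (hδ _ t ht rfl).2.2.1)
  refine ⟨fun t => δ (c t) t, hQ, hQ0, hQL, fun t ht => ?_⟩
  rcases (hδ _ t ht rfl).2.2.2 with hδB | ⟨hδP, hend⟩
  · exact Or.inl (hδB (hmem t ht))
  · exact Or.inr ⟨congrFun hδP t, hend⟩

end Chunks

end GeodesicPaths

lemma ContinuousOn.eq_of_isLeast {f : ℝ → ℝ} {a b c A : ℝ} (hf : ContinuousOn f (Icc a b))
    (hA : IsLeast {s | s ∈ Icc a b ∧ c ≤ f s} A) (haA : a < A) : f A = c := by
  obtain ⟨⟨hAI, hcA⟩, hleast⟩ := hA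
  have hfa : f a < c := by
    by_contra! h
    exact haA.not_ge (hleast ⟨⟨le_rfl, hAI.1.trans hAI.2⟩, h⟩)
  obtain ⟨x, hx, hfx⟩ :=
    intermediate_value_Icc haA.le (hf.mono (Icc_subset_Icc_right hAI.2)) ⟨hfa.le, hcA⟩
  rwa [le_antisymm hx.2 (hleast ⟨⟨hx.1, hx.2.trans hAI.2⟩, hfx.ge⟩)] at hfx

lemma ContinuousOn.eq_of_isGreatest {f : ℝ → ℝ} {a b c B : ℝ} (hf : ContinuousOn f (Icc a b))
    (hB : IsGreatest {s | s ∈ Icc a b ∧ c ≤ f s} B) (hBb : B < b) : f B = c := by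
  obtain ⟨⟨hBI, hcB⟩, hgreatest⟩ := hB
  have hfb : f b < c := by
    by_contra! h
    exact hBb.not_ge (hgreatest ⟨⟨hBI.1.trans hBI.2, le_rfl⟩, h⟩)
  obtain ⟨x, hx, hfx⟩ :=
    intermediate_value_Icc' hBb.le (hf.mono (Icc_subset_Icc_left hBI.1)) ⟨hfb.le, hcB⟩
  rwa [le_antisymm (hgreatest ⟨⟨hBI.1.trans hx.1, hx.2⟩, hfx.ge⟩) hx.1] at hfx

lemma arcoshR_eq_arcosh : arcoshR = Real.arcosh := rfl

lemma cosh_hdist (p q : Hyp n) :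
    cosh (hdist p q) = 1 + (dist p.1.1 q.1.1 ^ 2 + (p.1.2 - q.1.2) ^ 2) / (2 * p.1.2 * q.1.2) :=
  cosh_arcosh (le_add_of_nonneg_right (by have := p.2; have := q.2; positivity))

lemma hdist_nonneg (p q : Hyp n) : 0 ≤ hdist p q :=
  arcosh_nonneg (le_add_of_nonneg_right (by have := p.2; have := q.2; positivity))

lemma hdist_comm (p q : Hyp n) : hdist p q = hdist q p := by
  rw [hdist, hdist, dist_comm]
  ring_nf

lemma hdist_self (p : Hyp n) : hdist p p = 0 := by
  simp [hdist, arcoshR_eq_arcosh]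

lemma abs_log_height_sub_le_hdist (p q : Hyp n) :
    |log p.1.2 - log q.1.2| ≤ hdist p q := by
  have hp := p.2
  have hq := q.2
  have hcosh : cosh (log p.1.2 - log q.1.2) ≤ cosh (hdist p q) := by
    rw [cosh_hdist, cosh_eq, neg_sub, ← log_div hp.ne' hq.ne', ← log_div hq.ne' hp.ne',
      exp_log (by positivity), exp_log (by positivity)]
    have hgap : 1 + (dist p.1.1 q.1.1 ^ 2 + (p.1.2 - q.1.2) ^ 2) / (2 * p.1.2 * q.1.2)
        - (p.1.2 / q.1.2 + q.1.2 / p.1.2) / 2 = dist p.1.1 q.1.1 ^ 2 / (2 * p.1.2 * q.1.2) := by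
      field_simp
      ring
    linarith [show 0 ≤ dist p.1.1 q.1.1 ^ 2 / (2 * p.1.2 * q.1.2) by positivity]
  simpa [abs_of_nonneg (hdist_nonneg p q)] using cosh_le_cosh.mp hcosh

lemma inner_add_mul_sq_le (y z : EuclideanSpace ℝ (Fin n)) (b β : ℝ) :
    (inner ℝ y z + b * β) ^ 2 ≤ (‖y‖ ^ 2 + b ^ 2) * (‖z‖ ^ 2 + β ^ 2) := by
  have h := real_inner_mul_inner_self_le (WithLp.toLp 2 (y, b)) (WithLp.toLp 2 (z, β))
  simp only [WithLp.prod_inner_apply, real_inner_self_eq_norm_sq, RCLike.inner_apply,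
    conj_trivial] at h
  nlinarith [h]

abbrev Minkowski (n : ℕ) := EuclideanSpace ℝ (Fin n) × ℝ × ℝ

def lorentz (v w : Minkowski n) : ℝ := inner ℝ v.1 w.1 + v.2.1 * w.2.1 - v.2.2 * w.2.2

lemma lorentz_comm (v w : Minkowski n) : lorentz v w = lorentz w v := by
  simp only [lorentz, real_inner_comm]; ring

lemma lorentz_add_left (u v w : Minkowski n) : lorentz (u + v) w = lorentz u w + lorentz v w := by
  simp only [lorentz, Prod.fst_add, Prod.snd_add, inner_add_left]; ring

lemma lorentz_sub_left (u v w : Minkowski n) : lorentz (u - v) w = lorentz u w - lorentz v w := by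
  simp only [lorentz, Prod.fst_sub, Prod.snd_sub, inner_sub_left]; ring

lemma lorentz_smul_left (r : ℝ) (v w : Minkowski n) : lorentz (r • v) w = r * lorentz v w := by
  simp only [lorentz, Prod.smul_fst, Prod.smul_snd, real_inner_smul_left, smul_eq_mul]; ring

lemma lorentz_add_right (u v w : Minkowski n) : lorentz u (v + w) = lorentz u v + lorentz u w := by
  rw [lorentz_comm, lorentz_add_left, lorentz_comm v, lorentz_comm w]

lemma lorentz_sub_right (u v w : Minkowski n) : lorentz u (v - w) = lorentz u v - lorentz u w := by
  rw [lorentz_comm, lorentz_sub_left, lorentz_comm v, lorentz_comm w]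

lemma lorentz_smul_right (r : ℝ) (v w : Minkowski n) : lorentz v (r • w) = r * lorentz v w := by
  rw [lorentz_comm, lorentz_smul_left, lorentz_comm]

lemma lorentz_self (v : Minkowski n) : lorentz v v = ‖v.1‖ ^ 2 + v.2.1 ^ 2 - v.2.2 ^ 2 := by
  rw [lorentz, real_inner_self_eq_norm_sq]; ring

/-- The orthogonal complement of a unit timelike vector is spacelike. -/
lemma norm_sq_le_lorentz_self_mul {Q v : Minkowski n} (hQ : lorentz Q Q = -1)
    (hvQ : lorentz v Q = 0) : ‖v.1‖ ^ 2 + v.2.1 ^ 2 ≤ lorentz v v * Q.2.2 ^ 2 := by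
  have hcs := inner_add_mul_sq_le v.1 Q.1 v.2.1 Q.2.1
  rw [lorentz_self] at hQ ⊢
  rw [lorentz, sub_eq_zero] at hvQ
  rw [hvQ] at hcs
  nlinarith [sq_nonneg v.2.2, sq_nonneg Q.2.2]

lemma lorentz_self_nonneg_of_orthogonal {Q v : Minkowski n} (hQ : lorentz Q Q = -1)
    (hvQ : lorentz v Q = 0) : 0 ≤ lorentz v v := by
  have h : 0 ≤ lorentz v v * Q.2.2 ^ 2 :=
    le_trans (by positivity) (norm_sq_le_lorentz_self_mul hQ hvQ)
  rw [lorentz_self] at hQ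
  exact nonneg_of_mul_nonneg_left h (by nlinarith [sq_nonneg ‖Q.1‖, sq_nonneg Q.2.1])

lemma eq_zero_of_orthogonal_of_lorentz_self_eq_zero {Q v : Minkowski n}
    (hQ : lorentz Q Q = -1) (hvQ : lorentz v Q = 0) (hvv : lorentz v v = 0) : v = 0 := by
  have h := norm_sq_le_lorentz_self_mul hQ hvQ
  rw [hvv, zero_mul] at h
  have h1 : v.1 = 0 := norm_eq_zero.mp (by nlinarith [sq_nonneg v.2.1, norm_nonneg v.1])
  have h2 : v.2.1 = 0 := by nlinarith [sq_nonneg v.2.1, sq_nonneg ‖v.1‖]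
  have h3 : v.2.2 = 0 := by
    rw [lorentz_self, h1, h2] at hvv
    simpa using hvv
  exact Prod.ext h1 (Prod.ext h2 h3)

/-- The isometry of upper half-space onto the hyperboloid model. -/
def toHyperboloid (p : Hyp n) : Minkowski n :=
  ((p.1.2)⁻¹ • p.1.1, (‖p.1.1‖ ^ 2 + p.1.2 ^ 2 - 1) / (2 * p.1.2),
    (‖p.1.1‖ ^ 2 + p.1.2 ^ 2 + 1) / (2 * p.1.2))

lemma lorentz_toHyperboloid (p q : Hyp n) :
    lorentz (toHyperboloid p) (toHyperboloid q) = -cosh (hdist p q) := by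
  have hp := p.2.ne'
  have hq := q.2.ne'
  have hd : dist p.1.1 q.1.1 ^ 2 = ‖p.1.1‖ ^ 2 - 2 * inner ℝ p.1.1 q.1.1 + ‖q.1.1‖ ^ 2 := by
    rw [dist_eq_norm, norm_sub_sq_real]
  rw [cosh_hdist, hd]
  simp only [lorentz, toHyperboloid, real_inner_smul_left, real_inner_smul_right]
  field_simp
  ring

lemma lorentz_toHyperboloid_self (p : Hyp n) :
    lorentz (toHyperboloid p) (toHyperboloid p) = -1 := by
  rw [lorentz_toHyperboloid, hdist_self, cosh_zero]

lemma toHyperboloid_time_sub_space (p : Hyp n) :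
    (toHyperboloid p).2.2 - (toHyperboloid p).2.1 = (p.1.2)⁻¹ := by
  have := p.2.ne'
  simp only [toHyperboloid]
  field_simp
  ring

lemma lorentz_sq_le_of_orthogonal {Q v w : Minkowski n} (hQ : lorentz Q Q = -1)
    (hv : lorentz v Q = 0) (hw : lorentz w Q = 0) :
    lorentz v w ^ 2 ≤ lorentz v v * lorentz w w := by
  have hquad : ∀ x : ℝ, 0 ≤ lorentz w w * (x * x) + 2 * lorentz v w * x + lorentz v v := by
    intro x
    have horth : lorentz (v + x • w) Q = 0 := by
      rw [lorentz_add_left, lorentz_smul_left, hv, hw]; ring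
    have h := lorentz_self_nonneg_of_orthogonal hQ horth
    simp only [lorentz_add_left, lorentz_add_right, lorentz_smul_left, lorentz_smul_right,
      lorentz_comm w v] at h
    linarith
  have := discrim_le_zero hquad
  rw [discrim] at this
  nlinarith

theorem hdist_triangle (p q r : Hyp n) : hdist p r ≤ hdist p q + hdist q r := by
  set a := cosh (hdist p q)
  set b := cosh (hdist q r)
  set c := cosh (hdist p r)
  have hQ := lorentz_toHyperboloid_self q
  have hpq : lorentz (toHyperboloid p) (toHyperboloid q) = -a := lorentz_toHyperboloid p q
  have hqr : lorentz (toHyperboloid q) (toHyperboloid r) = -b := lorentz_toHyperboloid q r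
  have hpr : lorentz (toHyperboloid p) (toHyperboloid r) = -c := lorentz_toHyperboloid p r
  have hqp : lorentz (toHyperboloid q) (toHyperboloid p) = -a := by rw [lorentz_comm, hpq]
  have hrq : lorentz (toHyperboloid r) (toHyperboloid q) = -b := by rw [lorentz_comm, hqr]
  -- the components of `p` and `r` orthogonal to `q`
  have key := lorentz_sq_le_of_orthogonal (v := toHyperboloid p - a • toHyperboloid q)
    (w := toHyperboloid r - b • toHyperboloid q) hQ
    (by rw [lorentz_sub_left, lorentz_smul_left, hpq, hQ]; ring)
    (by rw [lorentz_sub_left, lorentz_smul_left, hrq, hQ]; ring)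
  simp only [lorentz_sub_left, lorentz_sub_right, lorentz_smul_left, lorentz_smul_right,
    lorentz_toHyperboloid_self, hpq, hqp, hqr, hrq, hpr, hQ] at key
  have hsa : sinh (hdist p q) ^ 2 = a ^ 2 - 1 := by rw [sinh_sq]
  have hsb : sinh (hdist q r) ^ 2 = b ^ 2 - 1 := by rw [sinh_sq]
  have hsa0 := sinh_nonneg_iff.mpr (hdist_nonneg p q)
  have hsb0 := sinh_nonneg_iff.mpr (hdist_nonneg q r)
  have hc : c ≤ cosh (hdist p q + hdist q r) := by
    rw [cosh_add]
    nlinarith [mul_nonneg hsa0 hsb0]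
  have := cosh_le_cosh.mp hc
  rwa [abs_of_nonneg (hdist_nonneg p r),
    abs_of_nonneg (add_nonneg (hdist_nonneg p q) (hdist_nonneg q r))] at this

lemma sinh_smul_toHyperboloid_add {A M B : Hyp n} {t L : ℝ}
    (hAM : hdist A M = t) (hMB : hdist M B = L - t) (hAB : hdist A B = L) :
    sinh (L - t) • toHyperboloid A + sinh t • toHyperboloid B = sinh L • toHyperboloid M := by
  have eAA := lorentz_toHyperboloid_self A
  have eMM := lorentz_toHyperboloid_self M
  have eBB := lorentz_toHyperboloid_self B
  have eAM : lorentz (toHyperboloid A) (toHyperboloid M) = -cosh t := by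
    rw [lorentz_toHyperboloid, hAM]
  have eMB : lorentz (toHyperboloid M) (toHyperboloid B) = -cosh (L - t) := by
    rw [lorentz_toHyperboloid, hMB]
  have eAB : lorentz (toHyperboloid A) (toHyperboloid B) = -cosh L := by
    rw [lorentz_toHyperboloid, hAB]
  have eMA := (lorentz_comm _ _).trans eAM
  have eBM := (lorentz_comm _ _).trans eMB
  have eBA := (lorentz_comm _ _).trans eAB
  have hcL : cosh L = cosh (L - t) * cosh t + sinh (L - t) * sinh t := by
    rw [← cosh_add, sub_add_cancel]
  have hsL : sinh L = sinh (L - t) * cosh t + cosh (L - t) * sinh t := by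
    rw [← sinh_add, sub_add_cancel]
  -- the difference is orthogonal to the timelike `toHyperboloid M` and isotropic
  rw [← sub_eq_zero]
  apply eq_zero_of_orthogonal_of_lorentz_self_eq_zero eMM
  · simp only [lorentz_sub_left, lorentz_add_left, lorentz_smul_left, eAM, eMM, eBM]
    rw [hsL]; ring
  · simp only [lorentz_sub_left, lorentz_add_left, lorentz_smul_left, lorentz_sub_right,
      lorentz_add_right, lorentz_smul_right, eAA, eMM, eBB, eAM, eMB, eAB, eMA, eBM, eBA]
    rw [hcL, hsL]
    nlinarith [cosh_sq_sub_sinh_sq (L - t), cosh_sq_sub_sinh_sq t]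

lemma sinh_div_height_add {A M B : Hyp n} {t L : ℝ}
    (hAM : hdist A M = t) (hMB : hdist M B = L - t) (hAB : hdist A B = L) :
    sinh (L - t) / A.1.2 + sinh t / B.1.2 = sinh L / M.1.2 := by
  have h := congrArg (fun v : Minkowski n => v.2.2 - v.2.1)
    (sinh_smul_toHyperboloid_add hAM hMB hAB)
  simp only [Prod.snd_add, Prod.fst_add, Prod.smul_snd, Prod.smul_fst, smul_eq_mul] at h
  simp only [div_eq_mul_inv, ← toHyperboloid_time_sub_space]
  linarith

/-- Horoballs centred at `∞` are convex. -/
lemma le_height_of_hdist_add_eq {A M B : Hyp n} {c : ℝ} (hc : 0 < c)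
    (hAMB : hdist A M + hdist M B = hdist A B) (hA : c ≤ A.1.2) (hB : c ≤ B.1.2) :
    c ≤ M.1.2 := by
  have ht := hdist_nonneg A M
  have hMB := hdist_nonneg M B
  rcases (hdist_nonneg A B).eq_or_lt with hL | hL
  · have h := abs_log_height_sub_le_hdist A M
    rw [show hdist A M = 0 by linarith, abs_nonpos_iff, sub_eq_zero] at h
    rwa [← log_le_log_iff hc M.2, ← h, log_le_log_iff hc A.2]
  have hi := sinh_div_height_add rfl (eq_sub_of_add_eq' hAMB) rfl
  have hsum : sinh (hdist A B - hdist A M) + sinh (hdist A M) ≤ sinh (hdist A B) := by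
    have := sinh_add (hdist A B - hdist A M) (hdist A M)
    rw [sub_add_cancel] at this
    nlinarith [one_le_cosh (hdist A B - hdist A M), one_le_cosh (hdist A M),
      sinh_nonneg_iff.mpr (show 0 ≤ hdist A B - hdist A M by linarith), sinh_nonneg_iff.mpr ht]
  have hA' : sinh (hdist A B - hdist A M) / A.1.2 ≤ sinh (hdist A B - hdist A M) / c :=
    div_le_div_of_nonneg_left (sinh_nonneg_iff.mpr (by linarith)) hc hA
  have hB' : sinh (hdist A M) / B.1.2 ≤ sinh (hdist A M) / c :=
    div_le_div_of_nonneg_left (sinh_nonneg_iff.mpr ht) hc hB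
  have hM : sinh (hdist A B) / M.1.2 ≤ sinh (hdist A B) / c := by
    rw [← hi]
    calc _ ≤ sinh (hdist A B - hdist A M) / c + sinh (hdist A M) / c := add_le_add hA' hB'
      _ ≤ sinh (hdist A B) / c := by rw [← add_div]; gcongr
  exact (div_le_div_iff_of_pos_left (sinh_pos_iff.mpr hL) M.2 hc).mp hM

def heightSuperlevel (γ : ℝ → Hyp n) (S : Set ℝ) (c : ℝ) : Set ℝ := {s | s ∈ S ∧ c ≤ (γ s).1.2}

lemma IsGeodesicOn.ordConnected_heightSuperlevel {γ : ℝ → Hyp n} {S : Set ℝ} {c : ℝ}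
    (hγ : IsGeodesicOn hdist γ S) (hS : OrdConnected S) (hc : 0 < c) :
    OrdConnected (heightSuperlevel γ S c) := by
  refine ⟨fun s hs r hr m hm => ?_⟩
  have hmI : m ∈ S := hS.out hs.1 hr.1 hm
  refine ⟨hmI, le_height_of_hdist_add_eq hc ?_ hs.2 hr.2⟩
  rw [hγ.dist_eq_sub hs.1 hmI hm.1, hγ.dist_eq_sub hmI hr.1 hm.2,
    hγ.dist_eq_sub hs.1 hr.1 (hm.1.trans hm.2)]
  ring

lemma IsGeodesicOn.continuousOn_height {γ : ℝ → Hyp n} {S : Set ℝ} (hγ : IsGeodesicOn hdist γ S) :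
    ContinuousOn (fun s => (γ s).1.2) S := by
  have hlip : LipschitzOnWith 1 (fun s => log (γ s).1.2) S := by
    refine LipschitzOnWith.of_dist_le_mul fun u hu v hv => ?_
    rw [Real.dist_eq, Real.dist_eq, NNReal.coe_one, one_mul, ← hγ u hu v hv]
    exact abs_log_height_sub_le_hdist _ _
  refine (continuous_exp.comp_continuousOn hlip.continuousOn).congr fun s _ => ?_
  exact (exp_log (γ s).2).symm

section HoroballTimes

variable {γ : ℝ → Hyp n} {L c : ℝ}

lemma IsGeodesicOn.isClosed_heightSuperlevel (hγ : IsGeodesicOn hdist γ (Icc 0 L)) :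
    IsClosed (heightSuperlevel γ (Icc 0 L) c) :=
  hγ.continuousOn_height.preimage_isClosed_of_isClosed isClosed_Icc isClosed_Ici

lemma IsGeodesicOn.eq_Icc_heightSuperlevel (hγ : IsGeodesicOn hdist γ (Icc 0 L)) (hc : 0 < c)
    (hne : (heightSuperlevel γ (Icc 0 L) c).Nonempty) :
    (heightSuperlevel γ (Icc 0 L) c) =
      Icc (sInf (heightSuperlevel γ (Icc 0 L) c)) (sSup (heightSuperlevel γ (Icc 0 L) c)) :=
  eq_Icc_csInf_csSup_of_connected_bdd_closed
    ⟨hne, (hγ.ordConnected_heightSuperlevel ordConnected_Icc hc).isPreconnected⟩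
    ⟨0, fun _ hs => hs.1.1⟩ ⟨L, fun _ hs => hs.1.2⟩ hγ.isClosed_heightSuperlevel

lemma IsGeodesicOn.height_csInf_heightSuperlevel (hγ : IsGeodesicOn hdist γ (Icc 0 L))
    (hne : (heightSuperlevel γ (Icc 0 L) c).Nonempty) :
    sInf (heightSuperlevel γ (Icc 0 L) c) = 0 ∨
      (γ (sInf (heightSuperlevel γ (Icc 0 L) c))).1.2 = c := by
  have hleast := hγ.isClosed_heightSuperlevel.isLeast_csInf hne ⟨0, fun _ hs => hs.1.1⟩
  refine (eq_or_lt_of_le hleast.1.1.1).imp Eq.symm fun h => ?_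
  exact hγ.continuousOn_height.eq_of_isLeast hleast h

lemma IsGeodesicOn.height_csSup_heightSuperlevel (hγ : IsGeodesicOn hdist γ (Icc 0 L))
    (hne : (heightSuperlevel γ (Icc 0 L) c).Nonempty) :
    sSup (heightSuperlevel γ (Icc 0 L) c) = L ∨
      (γ (sSup (heightSuperlevel γ (Icc 0 L) c))).1.2 = c := by
  have hgreatest := hγ.isClosed_heightSuperlevel.isGreatest_csSup hne ⟨L, fun _ hs => hs.1.2⟩
  refine (eq_or_lt_of_le hgreatest.1.1.2).imp id fun h => ?_
  exact hγ.continuousOn_height.eq_of_isGreatest hgreatest h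

end HoroballTimes

def IsProperlyDiscontinuous (Γ : Subgroup (Equiv.Perm (Hyp n))) : Prop :=
  ∀ (x : Hyp n) (r : ℝ), {g : Γ | hdist x (g.1 x) ≤ r}.Finite

def HoroballPreciselyInvariant (Γ : Subgroup (Equiv.Perm (Hyp n))) : Prop :=
  ∀ g ∈ Γ, ¬ HeightPres g → Disjoint (g '' {p : Hyp n | 1 ≤ p.1.2}) {p : Hyp n | 1 ≤ p.1.2}

section Quotient

variable {Γ : Subgroup (Equiv.Perm (Hyp n))} {Mt : Set (Hyp n)}

lemma equivalence_orbitRel : Equivalence (fun x y : ↥Mt => ∃ g ∈ Γ, g x.1 = y.1) where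
  refl _ := ⟨1, Γ.one_mem, rfl⟩
  symm := by
    rintro x y ⟨g, hg, hxy⟩
    exact ⟨g⁻¹, Γ.inv_mem hg, by rw [← hxy]; exact Equiv.symm_apply_apply g x.1⟩
  trans := by
    rintro x y z ⟨g, hg, hxy⟩ ⟨k, hk, hyz⟩
    exact ⟨k * g, Γ.mul_mem hk hg, by rw [Equiv.Perm.mul_apply, hxy, hyz]⟩

lemma mk_eq_mk_iff (x y : ↥Mt) :
    (Quot.mk _ x : HQuot Γ Mt) = Quot.mk _ y ↔ ∃ g ∈ Γ, g x.1 = y.1 := by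
  rw [Quot.eq]
  exact equivalence_orbitRel.eqvGen_iff

lemma apply_mem (hinv : ∀ g ∈ Γ, g '' Mt = Mt) {g : Equiv.Perm (Hyp n)} (hg : g ∈ Γ)
    {p : Hyp n} (hp : p ∈ Mt) : g p ∈ Mt := by
  rw [← hinv g hg]
  exact mem_image_of_mem g hp

lemma mk_apply (hinv : ∀ g ∈ Γ, g '' Mt = Mt) {g : Equiv.Perm (Hyp n)} (hg : g ∈ Γ)
    (y : ↥Mt) : (Quot.mk _ ⟨g y.1, apply_mem hinv hg y.2⟩ : HQuot Γ Mt) = Quot.mk _ y :=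
  (mk_eq_mk_iff _ _).mpr ⟨g⁻¹, Γ.inv_mem hg, Equiv.symm_apply_apply g y.1⟩

lemma qd_bddBelow (a b : HQuot Γ Mt) :
    BddBelow {r : ℝ | ∃ x y : ↥Mt, Quot.mk _ x = a ∧ Quot.mk _ y = b ∧ hdist x.1 y.1 = r} := by
  refine ⟨0, ?_⟩
  rintro r ⟨x, y, -, -, rfl⟩
  exact hdist_nonneg x.1 y.1

lemma qd_mk_le (x y : ↥Mt) : qd Γ Mt (Quot.mk _ x) (Quot.mk _ y) ≤ hdist x.1 y.1 :=
  csInf_le (qd_bddBelow _ _) ⟨x, y, rfl, rfl, rfl⟩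

lemma qd_nonneg (a b : HQuot Γ Mt) : 0 ≤ qd Γ Mt a b := by
  apply Real.sInf_nonneg
  rintro r ⟨x, y, -, -, rfl⟩
  exact hdist_nonneg x.1 y.1

lemma qd_comm (a b : HQuot Γ Mt) : qd Γ Mt a b = qd Γ Mt b a := by
  unfold qd
  congr 1
  ext r
  constructor <;> rintro ⟨x, y, hx, hy, rfl⟩ <;> exact ⟨y, x, hy, hx, hdist_comm _ _⟩

lemma exists_min_hdist_orbit
    (hdisc : IsProperlyDiscontinuous Γ) (x y : Hyp n) :
    ∃ g ∈ Γ, ∀ g' ∈ Γ, hdist x (g y) ≤ hdist x (g' y) := by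
  let f : Γ → ℝ := fun g => hdist x (g.1 y)
  have hT : {g | f g ≤ f 1}.Finite := by
    refine (hdisc y (hdist y x + f 1)).subset fun g hg => ?_
    exact (hdist_triangle y x (g.1 y)).trans (add_le_add_right hg _)
  obtain ⟨g, hgT, hmin⟩ := exists_min_image _ f hT ⟨1, le_refl (f 1)⟩
  refine ⟨g.1, g.2, fun g' hg' => ?_⟩
  by_cases h : f ⟨g', hg'⟩ ≤ f 1
  · exact hmin ⟨g', hg'⟩ h
  · exact hgT.trans (not_le.mp h).le

lemma exists_qd_eq (hiso : Γ ≤ hIsomGrp n)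
    (hdisc : IsProperlyDiscontinuous Γ)
    (hinv : ∀ g ∈ Γ, g '' Mt = Mt) (x y : ↥Mt) :
    ∃ z : ↥Mt, (Quot.mk _ z : HQuot Γ Mt) = Quot.mk _ y ∧
      qd Γ Mt (Quot.mk _ x) (Quot.mk _ y) = hdist x.1 z.1 := by
  obtain ⟨g, hg, hmin⟩ := exists_min_hdist_orbit hdisc x.1 y.1
  refine ⟨⟨g y.1, apply_mem hinv hg y.2⟩, mk_apply hinv hg y, le_antisymm ?_ ?_⟩
  · exact csInf_le (qd_bddBelow _ _) ⟨x, _, rfl, mk_apply hinv hg y, rfl⟩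
  refine le_csInf ⟨_, x, y, rfl, rfl, rfl⟩ ?_
  rintro r ⟨x', y', hx, hy, rfl⟩
  obtain ⟨g₁, hg₁, hx⟩ := (mk_eq_mk_iff x' x).mp hx
  obtain ⟨g₂, hg₂, hy⟩ := (mk_eq_mk_iff y y').mp hy.symm
  calc hdist x.1 (g y.1) ≤ hdist x.1 ((g₁ * g₂) y.1) := hmin _ (Γ.mul_mem hg₁ hg₂)
    _ = hdist x'.1 y'.1 := by rw [← hx, ← hy, Equiv.Perm.mul_apply, hiso hg₁]

lemma qd_triangle (hiso : Γ ≤ hIsomGrp n)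
    (hdisc : IsProperlyDiscontinuous Γ)
    (hinv : ∀ g ∈ Γ, g '' Mt = Mt) (a b c : HQuot Γ Mt) :
    qd Γ Mt a c ≤ qd Γ Mt a b + qd Γ Mt b c := by
  obtain ⟨x, rfl⟩ := Quot.exists_rep a
  obtain ⟨y, rfl⟩ := Quot.exists_rep b
  obtain ⟨w, rfl⟩ := Quot.exists_rep c
  obtain ⟨y', hy', hxy⟩ := exists_qd_eq hiso hdisc hinv x y
  obtain ⟨w', hw', hyw⟩ := exists_qd_eq hiso hdisc hinv y' w
  rw [hy'] at hyw
  calc qd Γ Mt (Quot.mk _ x) (Quot.mk _ w) ≤ hdist x.1 w'.1 := hw' ▸ qd_mk_le x w'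
    _ ≤ hdist x.1 y'.1 + hdist y'.1 w'.1 := hdist_triangle _ _ _
    _ = _ := by rw [hxy, hyw]

lemma subset_mcl (A : Set (HQuot Γ Mt)) : A ⊆ mcl Γ Mt A := fun _ => Or.inl

lemma mcl_union_subset (A B : Set (HQuot Γ Mt)) :
    mcl Γ Mt (A ∪ B) ⊆ mcl Γ Mt A ∪ mcl Γ Mt B := by
  rintro a (ha | ha)
  · exact ha.imp (Or.inl ·) (Or.inl ·)
  by_cases hA : ∀ ε > 0, ∃ b ∈ A, qd Γ Mt a b < ε
  · exact Or.inl (Or.inr hA)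
  push Not at hA
  obtain ⟨ε₀, hε₀, hA⟩ := hA
  refine Or.inr (Or.inr fun ε hε => ?_)
  obtain ⟨b, hb, hab⟩ := ha (min ε ε₀) (lt_min hε hε₀)
  rcases hb with hb | hb
  · exact absurd (hab.trans_le (min_le_right _ _)) (hA b hb).not_gt
  · exact ⟨b, hb, hab.trans_le (min_le_left _ _)⟩

lemma mcl_mcl_subset (hiso : Γ ≤ hIsomGrp n)
    (hdisc : IsProperlyDiscontinuous Γ)
    (hinv : ∀ g ∈ Γ, g '' Mt = Mt) (A : Set (HQuot Γ Mt)) :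
    mcl Γ Mt (mcl Γ Mt A) ⊆ mcl Γ Mt A := by
  rintro a (ha | ha)
  · exact ha
  refine Or.inr fun ε hε => ?_
  obtain ⟨b, hb | hb, hab⟩ := ha (ε / 2) (half_pos hε)
  · exact ⟨b, hb, hab.trans (half_lt_self hε)⟩
  obtain ⟨c, hc, hbc⟩ := hb (ε / 2) (half_pos hε)
  exact ⟨c, hc, by linarith [qd_triangle hiso hdisc hinv a b c]⟩

lemma subset_qHull (A : Set (HQuot Γ Mt)) : A ⊆ qHull Γ Mt A :=
  subset_sInter fun _ hB => hB.1

lemma qHull_subset {A B : Set (HQuot Γ Mt)} (hAB : A ⊆ B) (hB : DConvex (qd Γ Mt) B)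
    (hBcl : mcl Γ Mt B ⊆ B) : qHull Γ Mt A ⊆ B :=
  sInter_subset_of_mem ⟨hAB, hB, hBcl⟩

lemma qHull_mono {A B : Set (HQuot Γ Mt)} (hAB : A ⊆ B) : qHull Γ Mt A ⊆ qHull Γ Mt B :=
  sInter_subset_sInter fun _ hC => ⟨hAB.trans hC.1, hC.2⟩

lemma mk_mem_image_mk_iff (hinv : ∀ g ∈ Γ, g '' Mt = Mt) (p : Hyp n → Prop) (x : ↥Mt) :
    (Quot.mk _ x : HQuot Γ Mt) ∈ Quot.mk _ '' {y : ↥Mt | p y.1} ↔ ∃ g ∈ Γ, p (g x.1) := by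
  constructor
  · rintro ⟨y, hy, hyx⟩
    obtain ⟨g, hg, hgx⟩ := (mk_eq_mk_iff x y).mp hyx.symm
    exact ⟨g, hg, hgx ▸ hy⟩
  · rintro ⟨g, hg, hgx⟩
    exact ⟨_, hgx, mk_apply hinv hg x⟩

lemma mem_cuspBdry_of_mem_mcl_of_mem_cuspSet (hiso : Γ ≤ hIsomGrp n)
    (hdisc : IsProperlyDiscontinuous Γ)
    (hinv : ∀ g ∈ Γ, g '' Mt = Mt) {a : HQuot Γ Mt}
    (ha : a ∈ mcl Γ Mt (univ \ cuspSet Γ Mt)) (hC : a ∈ cuspSet Γ Mt) :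
    a ∈ cuspBdry Γ Mt := by
  obtain ⟨y, hy1, rfl⟩ := hC
  rcases ha with ha | ha
  · exact absurd ⟨y, hy1, rfl⟩ ha.2
  refine ⟨y, le_antisymm (not_lt.mp fun hy => ?_) hy1, rfl⟩
  -- points outside the cusp are at distance at least `log (height y)` from `y`
  obtain ⟨b, hb, hyb⟩ := ha (log y.1.1.2) (log_pos hy)
  obtain ⟨w, rfl⟩ := Quot.exists_rep b
  obtain ⟨z, hzw, hyz⟩ := exists_qd_eq hiso hdisc hinv y w
  have hz : z.1.1.2 < 1 := not_le.mp fun hz => hb.2 ⟨z, hz, hzw⟩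
  have := (le_abs_self _).trans (abs_log_height_sub_le_hdist y.1 z.1)
  linarith [log_neg z.1.2 hz]

lemma inter_cuspSet_subset {B : Set (HQuot Γ Mt)} (hiso : Γ ≤ hIsomGrp n)
    (hdisc : IsProperlyDiscontinuous Γ)
    (hinv : ∀ g ∈ Γ, g '' Mt = Mt) (hB : cuspBdry Γ Mt ⊆ B) :
    (mcl Γ Mt (univ \ cuspSet Γ Mt) ∪ B) ∩ cuspSet Γ Mt ⊆ B := by
  rintro a ⟨ha | ha, hC⟩
  · exact hB (mem_cuspBdry_of_mem_mcl_of_mem_cuspSet hiso hdisc hinv ha hC)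
  · exact ha

end Quotient

section HoroChunk

variable {Γ : Subgroup (Equiv.Perm (Hyp n))} {γ : ℝ → Hyp n} {L : ℝ}

lemma height_apply_eq_of_one_le (hprec : HoroballPreciselyInvariant Γ)
    {g g' : Equiv.Perm (Hyp n)} (hg : g ∈ Γ) (hg' : g' ∈ Γ) {p : Hyp n}
    (hgp : 1 ≤ (g p).1.2) (hg'p : 1 ≤ (g' p).1.2) (q : Hyp n) : (g' q).1.2 = (g q).1.2 := by
  have hk : ∀ q, (g' * g⁻¹) (g q) = g' q := fun q => by
    rw [Equiv.Perm.mul_apply, Equiv.Perm.inv_def, Equiv.symm_apply_apply]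
  by_cases hpres : HeightPres (g' * g⁻¹)
  · rw [← hk, hpres]
  · refine absurd (hprec _ (Γ.mul_mem hg' (Γ.inv_mem hg)) hpres) ?_
    exact not_disjoint_iff.mpr ⟨g' p, ⟨g p, hgp, hk p⟩, hg'p⟩

def horoChunk (Γ : Subgroup (Equiv.Perm (Hyp n))) (γ : ℝ → Hyp n) (L t : ℝ) : Set ℝ :=
  {s | s ∈ Icc 0 L ∧ (s = t ∨ ∃ g ∈ Γ, 1 ≤ (g (γ t)).1.2 ∧ 1 ≤ (g (γ s)).1.2)}

lemma horoChunk_subset (t : ℝ) : horoChunk Γ γ L t ⊆ Icc 0 L := fun _ hs => hs.1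

lemma mem_horoChunk_self {t : ℝ} (ht : t ∈ Icc 0 L) : t ∈ horoChunk Γ γ L t := ⟨ht, Or.inl rfl⟩

lemma horoChunk_eq_heightSuperlevel (hprec : HoroballPreciselyInvariant Γ)
    {g : Equiv.Perm (Hyp n)} (hg : g ∈ Γ) {t : ℝ} (hgt : 1 ≤ (g (γ t)).1.2) :
    horoChunk Γ γ L t = heightSuperlevel (g ∘ γ) (Icc 0 L) 1 := by
  ext s
  refine ⟨fun ⟨hs, hst⟩ => ⟨hs, ?_⟩, fun ⟨hs, hgs⟩ => ⟨hs, Or.inr ⟨g, hg, hgt, hgs⟩⟩⟩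
  rcases hst with rfl | ⟨g', hg', hg't, hg's⟩
  · exact hgt
  · rwa [Function.comp_apply, height_apply_eq_of_one_le hprec hg' hg hg't hgt]

lemma horoChunk_eq_singleton {t : ℝ} (ht : t ∈ Icc 0 L) (hgood : ∀ g ∈ Γ, (g (γ t)).1.2 < 1) :
    horoChunk Γ γ L t = {t} := by
  ext s
  refine ⟨fun ⟨_, hst⟩ => ?_, by rintro rfl; exact mem_horoChunk_self ht⟩
  rcases hst with rfl | ⟨g, hg, hgt, -⟩
  · rfl
  · exact absurd hgt (hgood g hg).not_ge

lemma horoChunk_eq_of_mem (hprec : HoroballPreciselyInvariant Γ)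
    {s t : ℝ} (hs : s ∈ horoChunk Γ γ L t) : horoChunk Γ γ L s = horoChunk Γ γ L t := by
  rcases hs with ⟨-, rfl | ⟨g, hg, hgt, hgs⟩⟩
  · rfl
  · rw [horoChunk_eq_heightSuperlevel hprec hg hgs, horoChunk_eq_heightSuperlevel hprec hg hgt]

lemma horoChunk_eq_Icc (hiso : Γ ≤ hIsomGrp n) (hprec : HoroballPreciselyInvariant Γ)
    (hγ : IsGeodesicOn hdist γ (Icc 0 L)) {t : ℝ} (ht : t ∈ Icc 0 L) :
    horoChunk Γ γ L t = Icc (sInf (horoChunk Γ γ L t)) (sSup (horoChunk Γ γ L t)) := by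
  by_cases hbad : ∃ g ∈ Γ, 1 ≤ (g (γ t)).1.2
  · obtain ⟨g, hg, hgt⟩ := hbad
    rw [horoChunk_eq_heightSuperlevel hprec hg hgt]
    exact (hγ.map (hiso hg)).eq_Icc_heightSuperlevel one_pos ⟨t, ht, hgt⟩
  · push Not at hbad
    rw [horoChunk_eq_singleton ht hbad, csInf_singleton, csSup_singleton, Icc_self]

end HoroChunk

section Main

variable {Γ : Subgroup (Equiv.Perm (Hyp n))} {Mt : Set (Hyp n)}

lemma IsGeodesicOn.quotMk (hiso : Γ ≤ hIsomGrp n)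
    (hdisc : IsProperlyDiscontinuous Γ)
    (hinv : ∀ g ∈ Γ, g '' Mt = Mt) {γ : ℝ → ↥Mt} {L : ℝ}
    (hγ : IsGeodesicOn hdist (fun t => (γ t).1) (Icc 0 L))
    (hL : L ≤ qd Γ Mt (Quot.mk _ (γ 0)) (Quot.mk _ (γ L))) :
    IsGeodesicOn (qd Γ Mt) (fun t => Quot.mk _ (γ t)) (Icc 0 L) :=
  IsGeodesicOn.of_le qd_comm (qd_triangle hiso hdisc hinv)
    (fun u hu v hv huv => (qd_mk_le _ _).trans_eq (hγ.dist_eq_sub hu hv huv))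
    (by rwa [sub_zero])

lemma exists_lift_isGeodesicOn (hiso : Γ ≤ hIsomGrp n)
    (hdisc : IsProperlyDiscontinuous Γ)
    (hinv : ∀ g ∈ Γ, g '' Mt = Mt) (hconv : DConvex hdist Mt) (a b : HQuot Γ Mt) :
    ∃ γ : ℝ → ↥Mt, IsGeodesicOn hdist (fun t => (γ t).1) (Icc 0 (qd Γ Mt a b)) ∧
      Quot.mk _ (γ 0) = a ∧ Quot.mk _ (γ (qd Γ Mt a b)) = b := by
  obtain ⟨x, rfl⟩ := Quot.exists_rep a
  obtain ⟨y, rfl⟩ := Quot.exists_rep b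
  obtain ⟨z, hzy, hxz⟩ := exists_qd_eq hiso hdisc hinv x y
  obtain ⟨_, ⟨γ, h0, h1, hγ, rfl⟩, hsub⟩ := hconv x.1 x.2 z.1 z.2
  rw [← hxz] at h1 hγ hsub
  let γ' : ℝ → ↥Mt := IccExtend (qd_nonneg _ _) fun t => ⟨γ t, hsub (mem_image_of_mem γ t.2)⟩
  have hγ' : ∀ t ∈ Icc 0 (qd Γ Mt (Quot.mk _ x) (Quot.mk _ y)), (γ' t).1 = γ t := fun t ht => by
    simp only [γ', IccExtend_of_mem _ _ ht]
  refine ⟨γ', fun u hu v hv => by simp only [hγ' u hu, hγ' v hv, hγ u hu v hv], ?_, ?_⟩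
  · rw [Subtype.ext ((hγ' 0 ⟨le_rfl, qd_nonneg _ _⟩).trans h0)]
  · rw [Subtype.ext ((hγ' _ ⟨qd_nonneg _ _, le_rfl⟩).trans h1), hzy]

lemma mk_mem_of_one_le_height (hiso : Γ ≤ hIsomGrp n)
    (hdisc : IsProperlyDiscontinuous Γ)
    (hinv : ∀ g ∈ Γ, g '' Mt = Mt) {B : Set (HQuot Γ Mt)} (hB : cuspBdry Γ Mt ⊆ B) {x : ↥Mt}
    {g : Equiv.Perm (Hyp n)} (hg : g ∈ Γ) (hgx : 1 ≤ (g x.1).1.2)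
    (h : Quot.mk _ x ∈ mcl Γ Mt (univ \ cuspSet Γ Mt) ∪ B ∨ (g x.1).1.2 = 1) :
    (Quot.mk _ x : HQuot Γ Mt) ∈ B := by
  rcases h with h | h
  · exact inter_cuspSet_subset hiso hdisc hinv hB
      ⟨h, (mk_mem_image_mk_iff hinv (fun p => 1 ≤ p.1.2) x).mpr ⟨g, hg, hgx⟩⟩
  · exact hB ((mk_mem_image_mk_iff hinv (fun p => p.1.2 = 1) x).mpr ⟨g, hg, h⟩)

lemma mk_horoChunk_endpoints_mem (hiso : Γ ≤ hIsomGrp n)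
    (hdisc : IsProperlyDiscontinuous Γ)
    (hinv : ∀ g ∈ Γ, g '' Mt = Mt) (hprec : HoroballPreciselyInvariant Γ)
    {B : Set (HQuot Γ Mt)} (hB : cuspBdry Γ Mt ⊆ B) {γ : ℝ → ↥Mt} {L : ℝ}
    (hγ : IsGeodesicOn hdist (fun t => (γ t).1) (Icc 0 L))
    (h0 : Quot.mk _ (γ 0) ∈ mcl Γ Mt (univ \ cuspSet Γ Mt) ∪ B)
    (hL : Quot.mk _ (γ L) ∈ mcl Γ Mt (univ \ cuspSet Γ Mt) ∪ B) {t : ℝ} (ht : t ∈ Icc 0 L)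
    {g : Equiv.Perm (Hyp n)} (hg : g ∈ Γ) (hgt : 1 ≤ (g (γ t).1).1.2) :
    Quot.mk _ (γ (sInf (horoChunk Γ (fun t => (γ t).1) L t))) ∈ B ∧
      Quot.mk _ (γ (sSup (horoChunk Γ (fun t => (γ t).1) L t))) ∈ B := by
  rw [horoChunk_eq_heightSuperlevel hprec hg hgt]
  have hgγ := hγ.map (hiso hg)
  have hne : (heightSuperlevel (g ∘ fun t => (γ t).1) (Icc 0 L) 1).Nonempty := ⟨t, ht, hgt⟩
  have hInf := hgγ.isClosed_heightSuperlevel.csInf_mem hne ⟨0, fun _ hs => hs.1.1⟩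
  have hSup := hgγ.isClosed_heightSuperlevel.csSup_mem hne ⟨L, fun _ hs => hs.1.2⟩
  refine ⟨mk_mem_of_one_le_height hiso hdisc hinv hB hg hInf.2 ?_,
    mk_mem_of_one_le_height hiso hdisc hinv hB hg hSup.2 ?_⟩
  · exact (hgγ.height_csInf_heightSuperlevel hne).imp (fun h => by rwa [h]) id
  · exact (hgγ.height_csSup_heightSuperlevel hne).imp (fun h => by rwa [h]) id

theorem dConvex_mcl_union (hiso : Γ ≤ hIsomGrp n)
    (hdisc : IsProperlyDiscontinuous Γ)
    (hinv : ∀ g ∈ Γ, g '' Mt = Mt) (hconv : DConvex hdist Mt) (hprec : HoroballPreciselyInvariant Γ)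
    {B : Set (HQuot Γ Mt)} (hB : cuspBdry Γ Mt ⊆ B) (hBconv : DConvex (qd Γ Mt) B) :
    DConvex (qd Γ Mt) (mcl Γ Mt (univ \ cuspSet Γ Mt) ∪ B) := by
  intro a ha b hb
  obtain ⟨γ, hγ, h0, h1⟩ := exists_lift_isGeodesicOn hiso hdisc hinv hconv a b
  have hP := hγ.quotMk hiso hdisc hinv (by rw [h0, h1])
  have hJ := fun t (ht : t ∈ Icc 0 (qd Γ Mt a b)) => horoChunk_eq_Icc hiso hprec hγ ht
  obtain ⟨Q, hQ, hQ0, hQL, hQB⟩ := hP.exists_reroute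
    (c := horoChunk Γ (fun t => (γ t).1) (qd Γ Mt a b)) (l := sInf) (r := sSup)
    qd_comm (qd_triangle hiso hdisc hinv) (qd_nonneg a b)
    (fun t ht => hJ t ht ▸ mem_horoChunk_self ht) (fun t ht => hJ t ht ▸ horoChunk_subset t)
    (fun t ht s hs => horoChunk_eq_of_mem hprec (hJ t ht ▸ hs)) hBconv
  refine ⟨Q '' Icc 0 (qd Γ Mt a b), ⟨Q, hQ0.trans h0, hQL.trans h1, hQ, rfl⟩, ?_⟩
  rintro _ ⟨t, ht, rfl⟩
  rcases hQB t ht with hQt | ⟨hQt, hend⟩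
  · exact Or.inr hQt
  refine Or.inl (subset_mcl _ ⟨trivial, fun hC => hend ?_⟩)
  rw [hQt] at hC
  obtain ⟨g, hg, hgt⟩ := (mk_mem_image_mk_iff hinv (fun p => 1 ≤ p.1.2) _).mp hC
  exact mk_horoChunk_endpoints_mem hiso hdisc hinv hprec hB hγ (by rwa [h0]) (by rwa [h1]) ht hg hgt

end Main

theorem thinning_cusps_general {n : ℕ} (Γ : Subgroup (Equiv.Perm (Hyp n)))
    (hiso : Γ ≤ hIsomGrp n)
    (hdisc : ∀ (x : Hyp n) (r : ℝ), {g : Γ | hdist x (g.1 x) ≤ r}.Finite)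
    (Mt : Set (Hyp n)) (hconv : DConvex hdist Mt)
    (hinv : ∀ g ∈ Γ, g '' Mt = Mt)
    (hprec : ∀ g ∈ Γ, ¬ HeightPres g →
      Disjoint (g '' {p : Hyp n | 1 ≤ p.1.2}) {p : Hyp n | 1 ≤ p.1.2})
    (hsub : cuspBdry Γ Mt ⊆ mcl Γ Mt (Set.univ \ cuspSet Γ Mt)) :
    qHull Γ Mt (mcl Γ Mt (Set.univ \ cuspSet Γ Mt)) =
      mcl Γ Mt (Set.univ \ cuspSet Γ Mt) ∪ qHull Γ Mt (cuspBdry Γ Mt) := by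
  set D := mcl Γ Mt (univ \ cuspSet Γ Mt)
  refine Subset.antisymm (fun w hw => or_iff_not_imp_left.mpr fun hwD => ?_)
    (union_subset (subset_qHull D) (qHull_mono hsub))
  refine mem_sInter.mpr fun B ⟨hB, hBconv, hBcl⟩ => ?_
  have hcl : mcl Γ Mt (D ∪ B) ⊆ D ∪ B :=
    (mcl_union_subset D B).trans (union_subset_union (mcl_mcl_subset hiso hdisc hinv _) hBcl)
  exact (qHull_subset subset_union_left (dConvex_mcl_union hiso hdisc hinv hconv hprec hB hBconv)
    hcl hw).resolve_left hwD

/-- **Thinning cusps.**  Suppose `M = M̃/Γ` is a convex hyperbolic manifold and `C` is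
a cusp of `M` (at `∞`, the horoball being precisely invariant under the nontrivial
parabolic stabilizer) with `∂_cC ⊆ closure(M \ C)`.  Then
`CH(closure(M \ C)) = closure(M \ C) ∪ CH(∂_cC)`, where `CH` denotes convex hull
taken inside `M`. -/
theorem thinning_cusps {n : ℕ} (Γ : Subgroup (Equiv.Perm (Hyp n)))
    (hiso : Γ ≤ hIsomGrp n)
    (hdisc : ∀ (x : Hyp n) (r : ℝ), {g : Γ | hdist x (g.1 x) ≤ r}.Finite)
    (hfree : ∀ g ∈ Γ, g ≠ 1 → ∀ p : Hyp n, g p ≠ p)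
    (Mt : Set (Hyp n)) (hconv : DConvex hdist Mt)
    (hinv : ∀ g ∈ Γ, g '' Mt = Mt)
    (hprec : ∀ g ∈ Γ, ¬ HeightPres g →
      Disjoint (g '' {p : Hyp n | 1 ≤ p.1.2}) {p : Hyp n | 1 ≤ p.1.2})
    (hpar : ∃ g ∈ Γ, HeightPres g ∧ g ≠ 1)
    (hsub : cuspBdry Γ Mt ⊆ mcl Γ Mt (Set.univ \ cuspSet Γ Mt)) :
    qHull Γ Mt (mcl Γ Mt (Set.univ \ cuspSet Γ Mt)) =
      mcl Γ Mt (Set.univ \ cuspSet Γ Mt) ∪ qHull Γ Mt (cuspBdry Γ Mt) :=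
  thinning_cusps_general Γ hiso hdisc Mt hconv hinv hprec hsub
end
end
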